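/- For each integer k, the map sending (j1,j2,j3) to (m,z) := (k^2 - j1^2 + j2^2 - j3^2, k - j1) is a bijection from NR_k := {(j1,j2,j3) ∈ ℤ³ : k = j1 - j2 - j3 and k^2 - j1^2 + j2^2 - j3^2 ≠ 0} onto {(m,z) ∈ ℤ² : m ≠ 0 and 2z divides m}. -/
import Mathlib


/-- For each integer `k`, the map `(j1,j2,j3) ↦ (k² - j1² + j2² - j3², k - j1)` is a
bijection from `NR_k = {(j1,j2,j3) : k = j1 - j2 - j3, k² - j1² + j2² - j3² ≠ 0}`
onto `{(m,z) : m ≠ 0 ∧ 2z ∣ m}`. -/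
theorem stmt_1 (k : ℤ) :
    Set.BijOn (fun j : ℤ × ℤ × ℤ => (k^2 - j.1^2 + j.2.1^2 - j.2.2^2, k - j.1))
      {j : ℤ × ℤ × ℤ | k = j.1 - j.2.1 - j.2.2 ∧ k^2 - j.1^2 + j.2.1^2 - j.2.2^2 ≠ 0}
      {p : ℤ × ℤ | p.1 ≠ 0 ∧ 2 * p.2 ∣ p.1} := by
  refine ⟨?_, ?_, ?_⟩
  · rintro ⟨j1, j2, j3⟩ ⟨hc, hm⟩
    refine ⟨hm, j3 + k, ?_⟩
    subst hc; ring
  · rintro ⟨a1, a2, a3⟩ ⟨ha, ham⟩ ⟨b1, b2, b3⟩ ⟨hb, hbm⟩ heq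
    simp only [Set.mem_setOf_eq] at ha hb ham hbm
    simp only [Prod.mk.injEq] at heq
    obtain ⟨h1, h2⟩ := heq
    have e1 : a1 = b1 := by omega
    subst e1
    have hz : a2 + a3 ≠ 0 := by
      intro h
      apply ham
      have h3 : a3 = -a2 := by omega
      have h4 : k = a1 := by omega
      rw [h3, h4]; ring
    have hprod : (a2 - a3) * (a2 + a3) = (b2 - b3) * (b2 + b3) := by
      linear_combination h1
    have hs : a2 + a3 = b2 + b3 := by omega
    rw [hs] at hprod
    have hz' : b2 + b3 ≠ 0 := by omega
    have hd := mul_right_cancel₀ hz' hprod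
    simp only [Prod.mk.injEq]
    refine ⟨trivial, by omega, by omega⟩
  · rintro ⟨m, z⟩ ⟨hm, q, hq⟩
    refine ⟨(k - z, k - z - q, q - k), ⟨by ring, ?_⟩, ?_⟩
    · have hv : k^2 - (k - z)^2 + (k - z - q)^2 - (q - k)^2 = m := by
        linear_combination -hq
      simpa [hv] using hm
    · simp only [Prod.mk.injEq]
      constructor
      · linear_combination -hq
      · ring
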